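/- arXiv:1402.5821 — 6 statements merged into one kernel-verified Lean document; each statement's English description precedes it below -/
import Mathlib

section
/- Let A be a cyclic Leibniz algebra over ℂ of dimension n with generator a, so {a, a², …, aⁿ} is a basis of A, and write a·aⁿ = α₁a + α₂a² + … + αₙaⁿ with αᵢ ∈ ℂ. Then α₁ = 0. -/
/-- `lpow μ x k` is the left-normed power `x^(k+1)`; so `lpow μ x 0 = x`,
`lpow μ x 1 = x·x = x²`, `lpow μ x 2 = x·x² = x³`, etc. -/
def lpow {A : Type*} [AddCommGroup A] [Module ℂ A]
    (μ : A →ₗ[ℂ] A →ₗ[ℂ] A) (x : A) : ℕ → A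
  | 0 => x
  | n + 1 => μ x (lpow μ x n)

/-!
The Leibniz identity with `x = y = a` gives `(a·a)·z = 0`, and inductively every power `aᵏ`
with `k ≥ 2` annihilates from the left. Hence `0 = aⁿ⁺¹·a = ∑ αᵢ aⁱ·a = α₁ a²`. Either `α₁ = 0`,
or `a² = 0`; in the latter case all powers beyond `a` vanish, so `∑ αᵢ aⁱ = aⁿ⁺¹ = 0` and
linear independence of the basis forces every `αᵢ = 0`.
-/

section

variable {A : Type*} [AddCommGroup A] [Module ℂ A] (μ : A →ₗ[ℂ] A →ₗ[ℂ] A)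

theorem lpow_succ_mul_eq_zero
    (hLeib : ∀ x y z : A, μ x (μ y z) = μ (μ x y) z + μ y (μ x z)) (a : A) (k : ℕ) (z : A) :
    μ (lpow μ a (k + 1)) z = 0 := by
  induction k generalizing z with
  | zero => exact right_eq_add.mp (hLeib a a z)
  | succ k ih =>
    have h := hLeib a (lpow μ a (k + 1)) z
    rw [ih, ih, map_zero, add_zero] at h
    exact h.symm

theorem sum_smul_lpow_mul
    (hLeib : ∀ x y z : A, μ x (μ y z) = μ (μ x y) z + μ y (μ x z))
    (a : A) {m : ℕ} (c : Fin (m + 1) → ℂ) (z : A) :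
    μ (∑ i : Fin (m + 1), c i • lpow μ a i) z = c 0 • μ a z := by
  rw [Fin.sum_univ_succ]
  simp only [map_add, map_sum, map_smul, LinearMap.add_apply, LinearMap.sum_apply,
    LinearMap.smul_apply, Fin.val_succ, lpow_succ_mul_eq_zero μ hLeib, smul_zero,
    Finset.sum_const_zero, add_zero]
  rfl

theorem lpow_succ_eq_zero_of_mul_self_eq_zero {a : A} (h : μ a a = 0) (k : ℕ) :
    lpow μ a (k + 1) = 0 := by
  induction k with
  | zero => exact h
  | succ k ih => exact (congrArg (μ a) ih).trans (map_zero _)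

end

/-- In a cyclic Leibniz algebra over ℂ of dimension n with generator a
(so {a, a², …, aⁿ} is a basis), writing a·aⁿ = α₁a + α₂a² + … + αₙaⁿ, one has α₁ = 0. -/
theorem cyclic_leibniz_first_coeff_zero
    {A : Type*} [AddCommGroup A] [Module ℂ A]
    (μ : A →ₗ[ℂ] A →ₗ[ℂ] A)
    (hLeib : ∀ x y z : A, μ x (μ y z) = μ (μ x y) z + μ y (μ x z))
    (n : ℕ) (hn : 0 < n) (a : A)
    (b : Module.Basis (Fin n) ℂ A) (hb : ∀ i : Fin n, b i = lpow μ a (i : ℕ))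
    (α : Fin n → ℂ)
    (hα : μ a (lpow μ a (n - 1)) = ∑ i : Fin n, α i • lpow μ a (i : ℕ)) :
    α ⟨0, hn⟩ = 0 := by
  obtain ⟨m, rfl⟩ := Nat.exists_eq_succ_of_ne_zero hn.ne'
  have hα' : lpow μ a (m + 1) = ∑ i : Fin (m + 1), α i • lpow μ a i := hα
  have hsq : α 0 • μ a a = 0 := by
    rw [← sum_smul_lpow_mul μ hLeib, ← hα']
    exact lpow_succ_mul_eq_zero μ hLeib a m a
  rcases smul_eq_zero.mp hsq with h | h
  · exact h
  · have hsum : ∑ i, α i • b i = 0 := by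
      simp only [hb, ← hα', lpow_succ_eq_zero_of_mul_self_eq_zero μ h]
    exact Fintype.linearIndependent_iff.mp b.linearIndependent α hsum 0
end

section
/- Let A be a 3-dimensional cyclic Leibniz algebra over ℂ with generator a satisfying a·a³ = αa² + βa³ where α ≠ 0, and let s ∈ ℂ be a square root of α. Then x = (1/s)a is also a generator of A (i.e. {x, x², x³} is a basis of A) and x·x³ = x² + (β/s)x³. -/
theorem lpow_smul {A : Type*} [AddCommGroup A] [Module ℂ A]
    (μ : A →ₗ[ℂ] A →ₗ[ℂ] A) (c : ℂ) (x : A) (n : ℕ) :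
    lpow μ (c • x) n = c ^ (n + 1) • lpow μ x n := by
  induction n with
  | zero => simp [lpow]
  | succ n ih =>
    simp only [lpow, ih, map_smul, LinearMap.smul_apply, smul_smul]
    ring_nf

theorem exists_basis_lpow_smul {A : Type*} [AddCommGroup A] [Module ℂ A]
    (μ : A →ₗ[ℂ] A →ₗ[ℂ] A) {ι : Type*} (f : ι → ℕ) (a : A) (b : Module.Basis ι ℂ A)
    (hb : ∀ i, b i = lpow μ a (f i)) {c : ℂ} (hc : c ≠ 0) :
    ∃ e : Module.Basis ι ℂ A, ∀ i, e i = lpow μ (c • a) (f i) :=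
  ⟨b.unitsSMul fun i => Units.mk0 c hc ^ (f i + 1), fun i => by
    rw [Module.Basis.unitsSMul_apply, hb, lpow_smul, Units.smul_def, Units.val_pow_eq_pow_val,
      Units.val_mk0]⟩

theorem cyclic_dim3_normalize_alpha_general
    {A : Type*} [AddCommGroup A] [Module ℂ A]
    (μ : A →ₗ[ℂ] A →ₗ[ℂ] A)
    (a : A) (b : Module.Basis (Fin 3) ℂ A) (hb : ∀ i : Fin 3, b i = lpow μ a (i : ℕ))
    (α β s : ℂ) (hα : α ≠ 0) (hs : s ^ 2 = α)
    (hmul : μ a (lpow μ a 2) = α • lpow μ a 1 + β • lpow μ a 2) :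
    (∃ e : Module.Basis (Fin 3) ℂ A, ∀ i : Fin 3, e i = lpow μ (s⁻¹ • a) (i : ℕ)) ∧
    μ (s⁻¹ • a) (lpow μ (s⁻¹ • a) 2) =
      lpow μ (s⁻¹ • a) 1 + (β / s) • lpow μ (s⁻¹ • a) 2 := by
  have hs0 : s ≠ 0 := (pow_ne_zero_iff two_ne_zero).mp (hs ▸ hα)
  refine ⟨exists_basis_lpow_smul μ _ a b hb (inv_ne_zero hs0), ?_⟩
  have hcube : μ (s⁻¹ • a) (lpow μ (s⁻¹ • a) 2) = s⁻¹ ^ 4 • μ a (lpow μ a 2) :=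
    lpow_smul μ s⁻¹ a 3
  rw [hcube, hmul, lpow_smul, lpow_smul, ← hs]
  match_scalars <;> grind

/-- If A is a 3-dimensional cyclic Leibniz algebra over ℂ with generator a,
a·a³ = αa² + βa³ with α ≠ 0, and s² = α, then x = (1/s)a is also a generator of A and
x·x³ = x² + (β/s)x³. -/
theorem cyclic_dim3_normalize_alpha
    {A : Type*} [AddCommGroup A] [Module ℂ A]
    (μ : A →ₗ[ℂ] A →ₗ[ℂ] A)
    (hLeib : ∀ x y z : A, μ x (μ y z) = μ (μ x y) z + μ y (μ x z))
    (a : A) (b : Module.Basis (Fin 3) ℂ A) (hb : ∀ i : Fin 3, b i = lpow μ a (i : ℕ))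
    (α β s : ℂ) (hα : α ≠ 0) (hs : s ^ 2 = α)
    (hmul : μ a (lpow μ a 2) = α • lpow μ a 1 + β • lpow μ a 2) :
    (∃ e : Module.Basis (Fin 3) ℂ A, ∀ i : Fin 3, e i = lpow μ (s⁻¹ • a) (i : ℕ)) ∧
    μ (s⁻¹ • a) (lpow μ (s⁻¹ • a) 2) =
      lpow μ (s⁻¹ • a) 1 + (β / s) • lpow μ (s⁻¹ • a) 2 :=
  cyclic_dim3_normalize_alpha_general μ a b hb α β s hα hs hmul
end

section
/- In the type (ii) algebra A, every x = c₁a + c₂a² + c₃a³ satisfies x³ = c₁²(c₁ + c₂ + c₃)a³ and x·x³ = c₁·x³. Consequently there is no generator x of A (element with {x, x², x³} linearly independent) and no γ ∈ ℂ with x·x³ = x² + γx³. -/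
/-- The 3-dimensional cyclic Leibniz algebra of type (ii): A = ℂ³ with basis
a = e₀, a² = e₁, a³ = e₂ and multiplication u·v = u₀ • L_a(v), where
L_a(a) = a², L_a(a²) = a³, L_a(a³) = a³ (so a²·v = a³·v = 0). -/
noncomputable def mulII : (Fin 3 → ℂ) →ₗ[ℂ] (Fin 3 → ℂ) →ₗ[ℂ] (Fin 3 → ℂ) :=
  (LinearMap.proj 0).smulRight (Matrix.mulVecLin !![0,0,0;1,0,0;0,1,1])

noncomputable def a : Fin 3 → ℂ := ![1,0,0]
noncomputable def a2 : Fin 3 → ℂ := ![0,1,0]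
noncomputable def a3 : Fin 3 → ℂ := ![0,0,1]

lemma mulII_apply (u v : Fin 3 → ℂ) :
    mulII u v = u 0 • ![0, v 0, v 1 + v 2] := by
  funext i
  fin_cases i <;>
    simp [mulII, Matrix.mulVecLin, Matrix.mulVec, dotProduct,
      Fin.sum_univ_three]
  try ring

/-- In the type (ii) algebra, every x = c₁a + c₂a² + c₃a³ satisfies
x³ = c₁²(c₁ + c₂ + c₃)a³ and x·x³ = c₁·x³; consequently there is no generator x
and γ ∈ ℂ with x·x³ = x² + γx³. -/
theorem typeII_no_type_iii_generator :
    (∀ c₁ c₂ c₃ : ℂ,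
      lpow mulII (c₁ • a + c₂ • a2 + c₃ • a3) 2 = (c₁ ^ 2 * (c₁ + c₂ + c₃)) • a3 ∧
      mulII (c₁ • a + c₂ • a2 + c₃ • a3) (lpow mulII (c₁ • a + c₂ • a2 + c₃ • a3) 2) =
        c₁ • lpow mulII (c₁ • a + c₂ • a2 + c₃ • a3) 2) ∧
    ¬ ∃ (x : Fin 3 → ℂ) (γ : ℂ),
        LinearIndependent ℂ ![x, lpow mulII x 1, lpow mulII x 2] ∧
        mulII x (lpow mulII x 2) = lpow mulII x 1 + γ • lpow mulII x 2 := by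
  constructor
  · intro c₁ c₂ c₃
    constructor
    · simp only [lpow, mulII_apply]
      funext i
      fin_cases i <;> (simp [a, a2, a3]; try ring)
    · simp only [lpow, mulII_apply]
      funext i
      fin_cases i <;> (simp [a, a2, a3]; try ring)
  · rintro ⟨x, γ, hli, heq⟩
    have hmul : mulII x (lpow mulII x 2) = x 0 • lpow mulII x 2 := by
      simp only [lpow, mulII_apply]
      funext i
      fin_cases i <;> simp <;> try ring
    rw [hmul] at heq
    have hzero : ∑ i, (![0, 1, γ - x 0] : Fin 3 → ℂ) i •
        ![x, lpow mulII x 1, lpow mulII x 2] i = 0 := by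
      simp [Fin.sum_univ_three]
      funext i
      have := congrFun heq i
      simp at this ⊢
      linear_combination -this
    have := (Fintype.linearIndependent_iff.mp hli) _ hzero 1
    simp at this
end

section
/- Let A be a cyclic Leibniz algebra over ℂ of dimension n with generator a. For x ∈ A define the Engel subalgebra E_A(x) = {t ∈ A : L_xᵏ(t) = 0 for some k ∈ ℕ}. If x = c₁a + c₂a² + … + cₙaⁿ with c₁ ≠ 0 then E_A(x) = E_A(a), and if c₁ = 0 then E_A(x) = A. In particular E_A(a) is the unique minimal Engel subalgebra of A. -/
/-- The Engel subalgebra E_A(x) = {t ∈ A : L_xᵏ(t) = 0 for some k}. -/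
def engel {A : Type*} [AddCommGroup A] [Module ℂ A]
    (μ : A →ₗ[ℂ] A →ₗ[ℂ] A) (x : A) : Set A :=
  {t : A | ∃ k : ℕ, (μ x ^ k) t = 0}

/-!
In a left Leibniz algebra left multiplication satisfies `L_{xy} = L_x L_y - L_y L_x`.
Hence `L_{a²} = 0` and inductively `L_{aᵏ} = 0` for all `k ≥ 2`, so for
`x = c₁a + ⋯ + cₙaⁿ` we get `L_x = c₁ L_a`. Thus `E_A(x) = E_A(a)` when `c₁ ≠ 0` and
`E_A(x) = A` when `c₁ = 0`; every Engel subalgebra is `E_A(a)` or `A`, which gives minimality.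
-/

section

variable {A : Type*} [AddCommGroup A] [Module ℂ A] {μ : A →ₗ[ℂ] A →ₗ[ℂ] A}

theorem engel_smul {c : ℂ} (hc : c ≠ 0) (x : A) : engel μ (c • x) = engel μ x := by
  ext t
  simp only [engel, Set.mem_ofPred_eq, map_smul, smul_pow, LinearMap.smul_apply, smul_eq_zero,
    pow_ne_zero _ hc, false_or]

theorem engel_zero : engel μ 0 = Set.univ :=
  Set.eq_univ_of_forall fun _ => ⟨1, by simp⟩

variable (hLeib : ∀ x y z : A, μ x (μ y z) = μ (μ x y) z + μ y (μ x z))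
include hLeib

theorem leftMul_mul_eq_commutator (x y : A) : μ (μ x y) = μ x * μ y - μ y * μ x := by
  ext z
  simp only [LinearMap.sub_apply, Module.End.mul_apply, hLeib x y z]
  abel

theorem leftMul_lpow_succ (x : A) (k : ℕ) : μ (lpow μ x (k + 1)) = 0 := by
  induction k with
  | zero => rw [lpow, lpow, leftMul_mul_eq_commutator hLeib, sub_self]
  | succ k ih => rw [lpow, leftMul_mul_eq_commutator hLeib, ih, mul_zero, zero_mul, sub_self]

theorem leftMul_sum_lpow {n : ℕ} (hn : 0 < n) (x : A) (c : Fin n → ℂ) :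
    μ (∑ i : Fin n, c i • lpow μ x i) = μ (c ⟨0, hn⟩ • x) := by
  rw [map_sum, Finset.sum_eq_single_of_mem ⟨0, hn⟩ (Finset.mem_univ _)]
  · rfl
  · rintro ⟨_ | k, hk⟩ _ hne
    · exact absurd rfl hne
    · rw [map_smul, leftMul_lpow_succ hLeib, smul_zero]

theorem engel_sum_lpow {n : ℕ} (hn : 0 < n) (x : A) (c : Fin n → ℂ) :
    engel μ (∑ i : Fin n, c i • lpow μ x i) = engel μ (c ⟨0, hn⟩ • x) := by
  simp only [engel, leftMul_sum_lpow hLeib hn]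

theorem engel_eq_or_eq_univ_of_basis_lpow {n : ℕ} (hn : 0 < n) {a : A}
    (b : Module.Basis (Fin n) ℂ A) (hb : ∀ i : Fin n, b i = lpow μ a i) (y : A) :
    engel μ y = engel μ a ∨ engel μ y = Set.univ := by
  have hy : y = ∑ i : Fin n, b.repr y i • lpow μ a i := by
    conv_lhs => rw [← b.sum_repr y]
    simp only [hb]
  rw [hy, engel_sum_lpow hLeib hn]
  by_cases hc : b.repr y ⟨0, hn⟩ = 0
  · exact Or.inr (by rw [hc, zero_smul, engel_zero])
  · exact Or.inl (engel_smul hc a)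

end

/-- In a cyclic Leibniz algebra with generator a: if x = c₁a + … + cₙaⁿ
with c₁ ≠ 0 then E_A(x) = E_A(a); if c₁ = 0 then E_A(x) = A. In particular E_A(a) is
the unique minimal Engel subalgebra of A. -/
theorem cyclic_engel_subalgebras
    {A : Type*} [AddCommGroup A] [Module ℂ A]
    (μ : A →ₗ[ℂ] A →ₗ[ℂ] A)
    (hLeib : ∀ x y z : A, μ x (μ y z) = μ (μ x y) z + μ y (μ x z))
    (n : ℕ) (hn : 0 < n) (a : A)
    (b : Module.Basis (Fin n) ℂ A) (hb : ∀ i : Fin n, b i = lpow μ a (i : ℕ)) :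
    (∀ c : Fin n → ℂ, c ⟨0, hn⟩ ≠ 0 →
        engel μ (∑ i : Fin n, c i • lpow μ a (i : ℕ)) = engel μ a) ∧
    (∀ c : Fin n → ℂ, c ⟨0, hn⟩ = 0 →
        engel μ (∑ i : Fin n, c i • lpow μ a (i : ℕ)) = Set.univ) ∧
    (∀ y : A, engel μ y ⊆ engel μ a → engel μ y = engel μ a) ∧
    (∀ x : A, (∀ y : A, engel μ y ⊆ engel μ x → engel μ y = engel μ x) →
        engel μ x = engel μ a) := by
  have dichotomy := engel_eq_or_eq_univ_of_basis_lpow hLeib hn b hb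
  refine ⟨fun c hc => ?_, fun c hc => ?_, fun y hy => ?_, fun x hx => ?_⟩
  · rw [engel_sum_lpow hLeib hn, engel_smul hc]
  · rw [engel_sum_lpow hLeib hn, hc, zero_smul, engel_zero]
  · rcases dichotomy y with h | h
    · exact h
    · exact h.trans (Set.univ_subset_iff.mp (h ▸ hy)).symm
  · rcases dichotomy x with h | h
    · exact h
    · exact (hx a (h ▸ Set.subset_univ _)).symm
end

section
/- In the type (ii) algebra A, the set A₀ = {t ∈ A : L_aᵏ(t) = 0 for some k ∈ ℕ} equals the span of {a − a³, a² − a³}. Moreover a·t ∈ A₀ for every t ∈ A₀ (so the left normalizer of A₀ in A is all of A, and A₀ is a left ideal), while (a − a³)·a = a² does not lie in A₀ (so A₀ is not a right ideal). -/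
lemma mulII_a (t : Fin 3 → ℂ) : mulII a t = ![0, t 0, t 1 + t 2] := by
  funext i
  fin_cases i <;>
    simp [mulII, a, Matrix.mulVecLin, Matrix.mulVec, dotProduct, Fin.sum_univ_three]

lemma sum_invar (t : Fin 3 → ℂ) :
    (mulII a t) 0 + (mulII a t) 1 + (mulII a t) 2 = t 0 + t 1 + t 2 := by
  rw [mulII_a]; simp; ring

lemma sum_pow (k : ℕ) (t : Fin 3 → ℂ) :
    ((mulII a ^ k) t) 0 + ((mulII a ^ k) t) 1 + ((mulII a ^ k) t) 2
      = t 0 + t 1 + t 2 := by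
  induction k generalizing t with
  | zero => simp
  | succ n ih => rw [pow_succ, Module.End.mul_apply, ih ((mulII a) t), sum_invar]

lemma mem_iff (t : Fin 3 → ℂ) :
    (∃ k : ℕ, (mulII a ^ k) t = 0) ↔ t 0 + t 1 + t 2 = 0 := by
  constructor
  · rintro ⟨k, hk⟩
    have := sum_pow k t
    rw [hk] at this
    simpa using this.symm
  · intro h
    refine ⟨2, ?_⟩
    rw [pow_succ, Module.End.mul_apply, pow_one, mulII_a, mulII_a]
    funext i
    fin_cases i <;> simp <;> linear_combination h

/-- In the type (ii) algebra, A₀ = {t : L_aᵏ(t) = 0 for some k} equals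
span{a − a³, a² − a³}; a·t ∈ A₀ for every t ∈ A₀ (A₀ is a left ideal, and its left
normalizer is all of A), yet (a − a³)·a = a² ∉ A₀ (A₀ is not a right ideal). -/
theorem typeII_fitting_null_component :
    ({t : Fin 3 → ℂ | ∃ k : ℕ, (mulII a ^ k) t = 0} =
        ↑(Submodule.span ℂ ({a - a3, a2 - a3} : Set (Fin 3 → ℂ)))) ∧
    (∀ t ∈ {t : Fin 3 → ℂ | ∃ k : ℕ, (mulII a ^ k) t = 0},
        mulII a t ∈ {t : Fin 3 → ℂ | ∃ k : ℕ, (mulII a ^ k) t = 0}) ∧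
    mulII (a - a3) a = a2 ∧
    a2 ∉ {t : Fin 3 → ℂ | ∃ k : ℕ, (mulII a ^ k) t = 0} := by
  refine ⟨?_, ?_, ?_, ?_⟩
  · ext t
    rw [Set.mem_setOf_eq, mem_iff, SetLike.mem_coe, Submodule.mem_span_pair]
    constructor
    · intro h
      refine ⟨t 0, t 1, ?_⟩
      funext i
      have h2 : t 2 = -t 0 - t 1 := by linear_combination h
      fin_cases i <;> simp [a, a2, a3, h2] <;> ring
    · rintro ⟨m, n, rfl⟩
      simp [a, a2, a3]; ring
  · intro t ht
    rw [Set.mem_setOf_eq, mem_iff] at ht ⊢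
    rw [mulII_a]
    have : (0:ℂ) + t 0 + (t 1 + t 2) = 0 := by linear_combination ht
    simpa using this
  · funext i
    fin_cases i <;>
      simp [mulII, a, a2, a3, Matrix.mulVecLin, Matrix.mulVec, dotProduct,
        Fin.sum_univ_three]
  · rw [Set.mem_setOf_eq, mem_iff]
    simp [a2]
end

section
/- In the type (ii) algebra A: (x·y)·z = 0 for all x, y, z ∈ A (every right-normed product of three elements vanishes), and (t·x)·x = 0 for all t, x ∈ A (every right multiplication operator R_x squares to zero); nevertheless L_aᵏ(a) = a³ ≠ 0 for every k ≥ 2, so A is not nilpotent. -/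
lemma mulII_apply_s16 (x y : Fin 3 → ℂ) :
    mulII x y = x 0 • (Matrix.mulVecLin !![0,0,0;1,0,0;0,1,1] y) := rfl

lemma zero0 (x y : Fin 3 → ℂ) : mulII x y 0 = 0 := by
  simp [mulII_apply_s16, Matrix.mulVecLin, Matrix.mulVec, dotProduct, Fin.sum_univ_three]

lemma mulII_zero0 {w : Fin 3 → ℂ} (h : w 0 = 0) (z : Fin 3 → ℂ) : mulII w z = 0 := by
  simp [mulII_apply_s16, h]

lemma m_a : mulII a a = a2 := by
  ext i
  fin_cases i <;>
  simp [mulII_apply_s16, a, a2, Matrix.mulVecLin, Matrix.mulVec, dotProduct, Fin.sum_univ_three]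

lemma m_a2 : mulII a a2 = a3 := by
  ext i
  fin_cases i <;>
  simp [mulII_apply_s16, a, a2, a3, Matrix.mulVecLin, Matrix.mulVec, dotProduct, Fin.sum_univ_three]

lemma m_a3 : mulII a a3 = a3 := by
  ext i
  fin_cases i <;>
  simp [mulII_apply_s16, a, a3, Matrix.mulVecLin, Matrix.mulVec, dotProduct, Fin.sum_univ_three]

lemma pow_a3 (n : ℕ) : (mulII a ^ n) a3 = a3 := by
  induction n with
  | zero => rfl
  | succ n ih => rw [pow_succ, Module.End.mul_apply, m_a3, ih]

/-- In the type (ii) algebra, (x·y)·z = 0 for all x, y, z (right-normed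
products of three elements vanish) and (t·x)·x = 0 for all t, x (right multiplications
square to zero); nevertheless L_aᵏ(a) = a³ ≠ 0 for every k ≥ 2, so A is not nilpotent. -/
theorem typeII_right_normed_products_vanish_but_not_nilpotent :
    (∀ x y z : Fin 3 → ℂ, mulII (mulII x y) z = 0) ∧
    (∀ t x : Fin 3 → ℂ, mulII (mulII t x) x = 0) ∧
    (∀ k : ℕ, 2 ≤ k → (mulII a ^ k) a = a3) ∧
    a3 ≠ (0 : Fin 3 → ℂ) := by
  refine ⟨fun x y z => mulII_zero0 (zero0 x y) z,
    fun t x => mulII_zero0 (zero0 t x) x, ?_, ?_⟩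
  · intro k hk
    obtain ⟨n, rfl⟩ := Nat.exists_eq_add_of_le hk
    rw [add_comm, pow_add, Module.End.mul_apply, pow_succ, pow_one,
      Module.End.mul_apply, m_a, m_a2, pow_a3]
  · intro h
    have := congrFun h 2
    simp [a3] at this
end
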